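/- arXiv:0709.2961 — 2 statements merged into one kernel-verified Lean document; each statement's English description precedes it below -/
import Mathlib

section
/- Let C be a set of difference constraints over a set X of integer variables that is satisfiable in ℤ, and let G be its constraint graph. Then for variables x, y and d ∈ ℤ, every assignment v : X → ℤ satisfying C also satisfies v(x) − v(y) ≤ d if and only if wSP(x,y) ≤ d, where wSP(x,y) is the minimum weight of a path from x to y in G (+∞ if no such path exists). -/
/-! If `v` satisfies `C`, summing `v a - v b ≤ w` along a path telescopes, so `v x - v y` is at
most the weight of every path from `x` to `y`; in particular the path weights from `x` are bounded
below and their infimum is attained. Conversely, if every path from `x` to `y` has weight `> d`,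
take any solution `u` of `C` shifted down so that `u y < -d`, and set
`v z = max (u z) (-dist(x, z))`. The triangle inequality for `dist(x, ·)` makes `-dist(x, ·)` a
solution wherever it is defined, and the maximum of two solutions is a solution; moreover
`v x ≥ 0` and `v y < -d`, so `v` violates `x - y ≤ d`. -/

namespace UTVPIPaper

/-- `IsPath E u p v`: `p` is a path (a sequence of consecutive weighted edges,
each belonging to the edge set `E`) from vertex `u` to vertex `v`. -/
inductive IsPath {V : Type*} (E : Set (V × V × ℤ)) : V → List (V × V × ℤ) → V → Prop
  | nil (v : V) : IsPath E v [] v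
  | cons {u v w : V} {d : ℤ} {p : List (V × V × ℤ)} :
      (u, v, d) ∈ E → IsPath E v p w → IsPath E u ((u, v, d) :: p) w

/-- The weight of a path: the sum of the weights of its edges. -/
def pweight {V : Type*} (p : List (V × V × ℤ)) : ℤ := (p.map fun e => e.2.2).sum

/-- The graph `E` has no negative weight cycle. -/
def NoNegCycle {V : Type*} (E : Set (V × V × ℤ)) : Prop :=
  ∀ (v : V) (p : List (V × V × ℤ)), IsPath E v p v → 0 ≤ pweight p

/-- `wSP E u v` is the minimum weight of a path from `u` to `v` in `E`
(`⊤` if no path exists). -/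
noncomputable def wSP {V : Type*} (E : Set (V × V × ℤ)) (u v : V) : WithTop ℤ :=
  sInf {w : WithTop ℤ | ∃ p, IsPath E u p v ∧ (pweight p : WithTop ℤ) = w}

section Paths

variable {V : Type*} {E : Set (V × V × ℤ)}

lemma pweight_append (p q : List (V × V × ℤ)) : pweight (p ++ q) = pweight p + pweight q := by
  simp [pweight]

lemma pweight_singleton (e : V × V × ℤ) : pweight [e] = e.2.2 := by
  simp [pweight]

lemma IsPath.append {u v w : V} {p q : List (V × V × ℤ)} (hp : IsPath E u p v)
    (hq : IsPath E v q w) : IsPath E u (p ++ q) w := by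
  induction hp with
  | nil => simpa
  | cons he _ ih => exact .cons he (ih hq)

lemma IsPath.concat {u v w : V} {p : List (V × V × ℤ)} {d : ℤ} (hp : IsPath E u p v)
    (he : (v, w, d) ∈ E) : IsPath E u (p ++ [(v, w, d)]) w :=
  hp.append (.cons he (.nil w))

def pathWeights (E : Set (V × V × ℤ)) (u v : V) : Set ℤ :=
  {w | ∃ p, IsPath E u p v ∧ pweight p = w}

lemma zero_mem_pathWeights (u : V) : (0 : ℤ) ∈ pathWeights E u u :=
  ⟨[], .nil u, rfl⟩

lemma add_mem_pathWeights {u v w : V} {a d : ℤ} (ha : a ∈ pathWeights E u v)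
    (he : (v, w, d) ∈ E) : a + d ∈ pathWeights E u w := by
  obtain ⟨p, hp, rfl⟩ := ha
  exact ⟨_, hp.concat he, by rw [pweight_append, pweight_singleton]⟩

lemma wSP_eq_sInf_image (E : Set (V × V × ℤ)) (u v : V) :
    wSP E u v = sInf ((↑) '' pathWeights E u v) := by
  refine congrArg sInf (Set.ext fun w => ?_)
  simp [pathWeights]

lemma wSP_le_coe_iff {u v : V} (hbdd : BddBelow (pathWeights E u v)) (d : ℤ) :
    wSP E u v ≤ d ↔ ∃ w ∈ pathWeights E u v, w ≤ d := by
  rw [wSP_eq_sInf_image]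
  rcases (pathWeights E u v).eq_empty_or_nonempty with hempty | hne
  · simp [hempty]
  · rw [← WithTop.coe_sInf' hne hbdd, WithTop.coe_le_coe]
    exact ⟨fun h => ⟨_, Int.csInf_mem hne hbdd, h⟩,
      fun ⟨w, hw, hwd⟩ => (csInf_le hbdd hw).trans hwd⟩

end Paths

section Solutions

variable {X : Type*} {C : Set (X × X × ℤ)}

def Satisfies (C : Set (X × X × ℤ)) (v : X → ℤ) : Prop :=
  ∀ e ∈ C, v e.1 - v e.2.1 ≤ e.2.2

lemma Satisfies.sub_const {v : X → ℤ} (hv : Satisfies C v) (c : ℤ) :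
    Satisfies C fun z => v z - c := fun e he => by
  simpa only [sub_sub_sub_cancel_right] using hv e he

lemma IsPath.sub_le_pweight {v : X → ℤ} (hv : Satisfies C v) {a b : X}
    {p : List (X × X × ℤ)} (hp : IsPath C a p b) : v a - v b ≤ pweight p := by
  induction hp with
  | nil => simp [pweight]
  | @cons a m b w p he _ ih =>
    have hedge : v a - v m ≤ w := hv _ he
    simp only [pweight, List.map_cons, List.sum_cons] at ih ⊢
    omega

lemma bddBelow_pathWeights {v : X → ℤ} (hv : Satisfies C v) (x z : X) :
    BddBelow (pathWeights C x z) :=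
  ⟨v x - v z, fun _ ⟨_, hp, hw⟩ => hw ▸ hp.sub_le_pweight hv⟩

/-- `max (u z) (-dist(x, z))`, written as a single infimum so that no case split on the
reachability of `z` is needed. -/
noncomputable def distPotential (C : Set (X × X × ℤ)) (x : X) (u : X → ℤ) (z : X) : ℤ :=
  -sInf (insert (-u z) (pathWeights C x z))

variable {u : X → ℤ}

lemma bddBelow_insert_pathWeights (hu : Satisfies C u) (x z : X) :
    BddBelow (insert (-u z) (pathWeights C x z)) :=
  (bddBelow_pathWeights hu x z).insert _

lemma satisfies_distPotential (hu : Satisfies C u) (x : X) :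
    Satisfies C (distPotential C x u) := by
  rintro ⟨a, b, w⟩ he
  obtain ⟨m, hm, hle⟩ : ∃ m ∈ insert (-u b) (pathWeights C x b),
      m ≤ sInf (insert (-u a) (pathWeights C x a)) + w := by
    rcases Int.csInf_mem (Set.insert_nonempty _ _) (bddBelow_insert_pathWeights hu x a) with
      hmin | hmin
    · have hedge : u a - u b ≤ w := hu _ he
      exact ⟨-u b, Set.mem_insert _ _, by omega⟩
    · exact ⟨_, Set.mem_insert_of_mem _ (add_mem_pathWeights hmin he), le_rfl⟩
  have := csInf_le (bddBelow_insert_pathWeights hu x b) hm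
  simp only [distPotential]
  omega

lemma distPotential_self_nonneg (hu : Satisfies C u) (x : X) : 0 ≤ distPotential C x u x := by
  have := csInf_le (bddBelow_insert_pathWeights hu x x)
    (Set.mem_insert_of_mem _ (zero_mem_pathWeights x))
  simp only [distPotential]
  omega

lemma distPotential_lt_neg (hu : Satisfies C u) (x : X) {y : X} {d : ℤ}
    (hpaths : ∀ w ∈ pathWeights C x y, d < w)
    (huy : u y < -d) : distPotential C x u y < -d := by
  have hmem := Int.csInf_mem (Set.insert_nonempty _ _) (bddBelow_insert_pathWeights hu x y)
  have : d < sInf (insert (-u y) (pathWeights C x y)) := by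
    rcases hmem with hmin | hmin
    · omega
    · exact hpaths _ hmin
  simp only [distPotential]
  omega

end Solutions

theorem diff_implies_iff_wSP_le_general {X : Type*}
    (C : Set (X × X × ℤ))
    (hsat : ∃ v : X → ℤ, ∀ e ∈ C, v e.1 - v e.2.1 ≤ e.2.2)
    (x y : X) (d : ℤ) :
    (∀ v : X → ℤ, (∀ e ∈ C, v e.1 - v e.2.1 ≤ e.2.2) → v x - v y ≤ d) ↔
      wSP C x y ≤ (d : WithTop ℤ) := by
  obtain ⟨v₀, hv₀⟩ := hsat
  rw [wSP_le_coe_iff (bddBelow_pathWeights hv₀ x y)]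
  constructor
  · intro himp
    by_contra! hpaths
    have hu : Satisfies C fun z => v₀ z - (v₀ y + d + 1) := Satisfies.sub_const hv₀ _
    have hx := distPotential_self_nonneg hu x
    have hy := distPotential_lt_neg hu x hpaths (by omega)
    have := himp _ (satisfies_distPotential hu x)
    omega
  · rintro ⟨_, ⟨p, hp, rfl⟩, hpd⟩ v hv
    exact (hp.sub_le_pweight hv).trans hpd

/-- Let `C` be a (finite) satisfiable set of difference constraints
(the constraint `(x, y, d)` means `x - y ≤ d`) with constraint graph having an edge
`(x, y, d)` for each constraint `x - y ≤ d` in `C`. Then `C` implies `x - y ≤ d`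
iff `wSP(x, y) ≤ d`. -/
theorem diff_implies_iff_wSP_le {X : Type*}
    (C : Set (X × X × ℤ)) (hfin : C.Finite)
    (hsat : ∃ v : X → ℤ, ∀ e ∈ C, v e.1 - v e.2.1 ≤ e.2.2)
    (x y : X) (d : ℤ) :
    (∀ v : X → ℤ, (∀ e ∈ C, v e.1 - v e.2.1 ≤ e.2.2) → v x - v y ≤ d) ↔
      wSP C x y ≤ (d : WithTop ℤ) :=
  diff_implies_iff_wSP_le_general C hsat x y d

end UTVPIPaper
end

section
/- Let φ be a set of UTVPI constraints over integer variables. Every assignment v : X → ℤ that satisfies all constraints of φ also satisfies all constraints of TTC(φ); consequently φ and TTC(φ) have exactly the same integer solutions. -/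
namespace UTVPIPaper

/-- A linear integer constraint `f ≤ bound`, where `f` is a finitely supported
integer linear form over the variables `X`. -/
structure UC (X : Type*) where
  f : X →₀ ℤ
  bound : ℤ

variable {X : Type*}

/-- `c` is a UTVPI constraint, i.e. of the form `a·x + b·y ≤ d` with `a, b ∈ {-1, 0, 1}`. -/
def UC.IsUTVPI (c : UC X) : Prop :=
  ∃ (a b : ℤ) (x y : X), (a = -1 ∨ a = 0 ∨ a = 1) ∧ (b = -1 ∨ b = 0 ∨ b = 1) ∧
    c.f = Finsupp.single x a + Finsupp.single y b

/-- The constraint `c` holds under the integer assignment `v`. -/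
def UC.holds (v : X → ℤ) (c : UC X) : Prop :=
  (c.f.sum fun x a => a * v x) ≤ c.bound

/-- The assignment `v` satisfies all constraints of `φ`. -/
def Sat (v : X → ℤ) (φ : Set (UC X)) : Prop := ∀ c ∈ φ, c.holds v

/-- `φ` is satisfiable in ℤ. -/
def SatZ (φ : Set (UC X)) : Prop := ∃ v : X → ℤ, Sat v φ

/-- The constraint `c` holds under the rational assignment `v`. -/
def UC.holdsQ (v : X → ℚ) (c : UC X) : Prop :=
  (c.f.sum fun x a => (a : ℚ) * v x) ≤ (c.bound : ℚ)

/-- `φ` is satisfiable in ℚ. -/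
def SatQ (φ : Set (UC X)) : Prop := ∃ v : X → ℚ, ∀ c ∈ φ, c.holdsQ v

/-- The transitive closure `TC(φ)`: the smallest set containing `φ` closed under
the rule: `a·x - c·y ≤ d₁` and `c·y + b·z ≤ d₂` imply `a·x + b·z ≤ d₁ + d₂`,
for `a, b ∈ {-1,0,1}` and `c ∈ {-1,1}`. -/
inductive TC (φ : Set (UC X)) : UC X → Prop
  | base {c : UC X} : c ∈ φ → TC φ c
  | trans {a b c : ℤ} {x y z : X} {d₁ d₂ : ℤ} :
      (a = -1 ∨ a = 0 ∨ a = 1) → (b = -1 ∨ b = 0 ∨ b = 1) → (c = -1 ∨ c = 1) →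
      TC φ ⟨Finsupp.single x a - Finsupp.single y c, d₁⟩ →
      TC φ ⟨Finsupp.single y c + Finsupp.single z b, d₂⟩ →
      TC φ ⟨Finsupp.single x a + Finsupp.single z b, d₁ + d₂⟩

/-- The tightened closure `TI(φ)`: the smallest set containing `φ` closed under
the rule: `a·x + a·x ≤ d` implies `a·x ≤ ⌊d/2⌋`, for `a ∈ {-1,1}`. -/
inductive TI (φ : Set (UC X)) : UC X → Prop
  | base {c : UC X} : c ∈ φ → TI φ c
  | tighten {a : ℤ} {x : X} {d : ℤ} :
      (a = -1 ∨ a = 1) →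
      TI φ ⟨Finsupp.single x a + Finsupp.single x a, d⟩ →
      TI φ ⟨Finsupp.single x a, Int.fdiv d 2⟩

/-- The tightened transitive closure `TTC(φ)`: the smallest set containing `φ`
closed under both the transitivity and the tightening rules. -/
inductive TTC (φ : Set (UC X)) : UC X → Prop
  | base {c : UC X} : c ∈ φ → TTC φ c
  | trans {a b c : ℤ} {x y z : X} {d₁ d₂ : ℤ} :
      (a = -1 ∨ a = 0 ∨ a = 1) → (b = -1 ∨ b = 0 ∨ b = 1) → (c = -1 ∨ c = 1) →
      TTC φ ⟨Finsupp.single x a - Finsupp.single y c, d₁⟩ →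
      TTC φ ⟨Finsupp.single y c + Finsupp.single z b, d₂⟩ →
      TTC φ ⟨Finsupp.single x a + Finsupp.single z b, d₁ + d₂⟩
  | tighten {a : ℤ} {x : X} {d : ℤ} :
      (a = -1 ∨ a = 1) →
      TTC φ ⟨Finsupp.single x a + Finsupp.single x a, d⟩ →
      TTC φ ⟨Finsupp.single x a, Int.fdiv d 2⟩

/-- Vertices of the constraint graph: `(true, x)` is `x⁺` and `(false, x)` is `x⁻`. -/
abbrev Vtx (X : Type*) := Bool × X

/-- The counterpart `-u` of a vertex `u`. -/
def vneg (u : Vtx X) : Vtx X := (!u.1, u.2)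

/-- The set of edges `E(c)` associated with a UTVPI constraint `c`
(the transformation table):
`x - y ≤ d` gives `(y⁺, x⁺, d)` and `(x⁻, y⁻, d)`;
`x + y ≤ d` gives `(y⁻, x⁺, d)` and `(x⁻, y⁺, d)`;
`-x - y ≤ d` gives `(y⁺, x⁻, d)` and `(x⁺, y⁻, d)`;
`x ≤ d` gives `(x⁻, x⁺, 2d)`; `-x ≤ d` gives `(x⁺, x⁻, 2d)`. -/
def cedges (c : UC X) : Set (Vtx X × Vtx X × ℤ) :=
  { e | ∃ (x y : X) (d : ℤ),
      (c = ⟨Finsupp.single x 1 - Finsupp.single y 1, d⟩ ∧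
        (e = ((true, y), (true, x), d) ∨ e = ((false, x), (false, y), d))) ∨
      (c = ⟨Finsupp.single x 1 + Finsupp.single y 1, d⟩ ∧
        (e = ((false, y), (true, x), d) ∨ e = ((false, x), (true, y), d))) ∨
      (c = ⟨-Finsupp.single x 1 - Finsupp.single y 1, d⟩ ∧
        (e = ((true, y), (false, x), d) ∨ e = ((true, x), (false, y), d))) ∨
      (c = ⟨Finsupp.single x 1, d⟩ ∧ e = ((false, x), (true, x), 2 * d)) ∨
      (c = ⟨-Finsupp.single x 1, d⟩ ∧ e = ((true, x), (false, x), 2 * d)) }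

/-- The constraint graph `G_φ` of a set `φ` of UTVPI constraints. -/
def Gr (φ : Set (UC X)) : Set (Vtx X × Vtx X × ℤ) := { e | ∃ c ∈ φ, e ∈ cedges c }

/-- The bounds function `ρ(u) = ⌊wSP(u, -u) / 2⌋` (`⊤` if there is no path from `u` to `-u`). -/
noncomputable def rho (φ : Set (UC X)) (u : Vtx X) : WithTop ℤ :=
  (wSP (Gr φ) u (vneg u)).map fun w => Int.fdiv w 2

theorem UC.holds_iff (v : X → ℤ) (c : UC X) :
    c.holds v ↔ Finsupp.linearCombination ℤ v c.f ≤ c.bound := by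
  simp only [UC.holds, Finsupp.linearCombination_apply, smul_eq_mul]

open Finsupp in
theorem UC.holds_trans {v : X → ℤ} {a b c : ℤ} {x y z : X} {d₁ d₂ : ℤ}
    (h₁ : UC.holds v ⟨single x a - single y c, d₁⟩)
    (h₂ : UC.holds v ⟨single y c + single z b, d₂⟩) :
    UC.holds v ⟨single x a + single z b, d₁ + d₂⟩ := by
  simp only [UC.holds_iff, map_add, map_sub, linearCombination_single, smul_eq_mul] at *
  linarith

open Finsupp in
/-- Sound only over `ℤ`: `a * v x` is an integer, so `2 * (a * v x) ≤ d` allows rounding `d / 2` down. -/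
theorem UC.holds_tighten {v : X → ℤ} {a : ℤ} {x : X} {d : ℤ}
    (h : UC.holds v ⟨single x a + single x a, d⟩) :
    UC.holds v ⟨single x a, d.fdiv 2⟩ := by
  simp only [UC.holds_iff, map_add, linearCombination_single, smul_eq_mul] at *
  rw [Int.fdiv_eq_ediv_of_nonneg _ zero_le_two]
  omega

theorem Sat.holds_of_TTC {φ : Set (UC X)} {v : X → ℤ} (hv : Sat v φ) {c : UC X}
    (hc : TTC φ c) : c.holds v := by
  induction hc with
  | base h => exact hv _ h
  | trans _ _ _ _ _ ih₁ ih₂ => exact UC.holds_trans ih₁ ih₂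
  | tighten _ _ ih => exact UC.holds_tighten ih

theorem sat_setOf_TTC_iff {φ : Set (UC X)} {v : X → ℤ} :
    Sat v {c : UC X | TTC φ c} ↔ Sat v φ :=
  ⟨fun hv c hc => hv c (TTC.base hc), fun hv _ hc => hv.holds_of_TTC hc⟩

/-- Every integer assignment satisfying all constraints of `φ`
also satisfies all constraints of `TTC(φ)`; consequently `φ` and `TTC(φ)` have
exactly the same integer solutions. -/
theorem TTC_same_solutions {X : Type*} (φ : Set (UC X)) :
    ∀ v : X → ℤ,
      (Sat v φ → ∀ c : UC X, TTC φ c → c.holds v) ∧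
      (Sat v φ ↔ Sat v {c : UC X | TTC φ c}) :=
  fun _ => ⟨fun hv _ => hv.holds_of_TTC, sat_setOf_TTC_iff.symm⟩

end UTVPIPaper
end
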